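/- Let k ≥ 2 be an integer and let m, n ≥ 1 be integers with gcd(m, n) = 1. If λ ∈ ℝ is a root of P^k_m, then λ is not a root of P^k_n. -/
import Mathlib


open Polynomial

/-- The generalized Fibonacci polynomials `P^k_n ∈ ℝ[x]`:
`P^k_0 = 0`, `P^k_1 = 1`, `P^k_n = x·P^k_{n-1} − k·P^k_{n-2}`. -/
noncomputable def Ppoly (k : ℕ) : ℕ → Polynomial ℝ
  | 0 => 0
  | 1 => 1
  | n + 2 => X * Ppoly k (n + 1) - C (k : ℝ) * Ppoly k n

/-- Evaluation of `Ppoly` at a point. -/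
noncomputable def Sval (k : ℕ) (lam : ℝ) (n : ℕ) : ℝ := (Ppoly k n).eval lam

lemma Sval_zero (k : ℕ) (lam : ℝ) : Sval k lam 0 = 0 := by simp [Sval, Ppoly]

lemma Sval_one (k : ℕ) (lam : ℝ) : Sval k lam 1 = 1 := by simp [Sval, Ppoly]

lemma Sval_rec (k : ℕ) (lam : ℝ) (n : ℕ) :
    Sval k lam (n + 2) = lam * Sval k lam (n + 1) - k * Sval k lam n := by
  simp [Sval, Ppoly]

lemma Sval_add (k : ℕ) (lam : ℝ) (p q : ℕ) :
    Sval k lam (p + q + 1) =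
      Sval k lam (p + 1) * Sval k lam (q + 1) - k * Sval k lam p * Sval k lam q := by
  induction q using Nat.twoStepInduction with
  | zero => simp [Sval_one, Sval_zero]
  | one =>
      have h2 : Sval k lam 2 = lam := by
        have := Sval_rec k lam 0; simp [Sval_one, Sval_zero] at this; simpa using this
      have := Sval_rec k lam p
      rw [show p + 1 + 1 = p + 2 from rfl] at *
      rw [this, h2, Sval_one]; ring
  | more q ih ih2 =>
      have e2 : p + (q + 1) + 1 = (p + q + 1) + 1 := by ring
      rw [e2] at ih2
      rw [show p + (q + 2) + 1 = (p + q + 1) + 2 from by ring, Sval_rec, ih2, ih,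
        show q + 2 + 1 = q + 1 + 2 from rfl, Sval_rec k lam (q + 1),
        show q + 1 + 1 = q + 2 from rfl, Sval_rec k lam q]
      ring

lemma Sval_no_consec (k : ℕ) (hk : 2 ≤ k) (lam : ℝ) :
    ∀ n, ¬ (Sval k lam n = 0 ∧ Sval k lam (n + 1) = 0) := by
  intro n
  induction n with
  | zero => intro ⟨_, h1⟩; rw [Sval_one] at h1; norm_num at h1
  | succ n ih =>
      rintro ⟨h1, h2⟩
      apply ih
      have hr := Sval_rec k lam n
      rw [h1, h2] at hr
      have hk0 : (k : ℝ) ≠ 0 := by positivity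
      have hk0' : (k : ℝ) * Sval k lam n = 0 := by linarith
      exact ⟨(mul_eq_zero.mp hk0').resolve_left hk0, h1⟩

lemma Sval_key (k : ℕ) (hk : 2 ≤ k) (lam : ℝ) :
    ∀ N m n, m + n ≤ N → 1 ≤ m → 1 ≤ n → Nat.gcd m n = 1 →
      Sval k lam m = 0 → Sval k lam n = 0 → False := by
  intro N
  induction N with
  | zero => intro m n h hm hn _ _ _; simp at h; omega
  | succ N ih =>
      intro m n hmn hm hn hcop hsm hsn
      have hk0 : (k : ℝ) ≠ 0 := by positivity
      rcases lt_trichotomy m n with hlt | heq | hgt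
      · -- n = (m-1) + (n-m) + 1
        have e : (m - 1) + (n - m) + 1 = n := by omega
        have hadd := Sval_add k lam (m - 1) (n - m)
        rw [e, show m - 1 + 1 = m by omega, hsm, hsn] at hadd
        have hm1 : Sval k lam (m - 1) ≠ 0 := by
          intro h0
          exact Sval_no_consec k hk lam (m - 1) ⟨h0, by rw [show m - 1 + 1 = m by omega]; exact hsm⟩
        have hnm : Sval k lam (n - m) = 0 := by
          have : (k : ℝ) * Sval k lam (m - 1) * Sval k lam (n - m) = 0 := by linarith
          rcases mul_eq_zero.mp this with h | h
          · rcases mul_eq_zero.mp h with h | h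
            · exact absurd h hk0
            · exact absurd h hm1
          · exact h
        have hcop' : Nat.gcd m (n - m) = 1 := by
          rw [Nat.gcd_sub_self_right (le_of_lt hlt)]; exact hcop
        exact ih m (n - m) (by omega) hm (by omega) hcop' hsm hnm
      · subst heq
        rw [Nat.gcd_self] at hcop
        rw [hcop, Sval_one] at hsm
        norm_num at hsm
      · have e : (n - 1) + (m - n) + 1 = m := by omega
        have hadd := Sval_add k lam (n - 1) (m - n)
        rw [e, show n - 1 + 1 = n by omega, hsm, hsn] at hadd
        have hn1 : Sval k lam (n - 1) ≠ 0 := by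
          intro h0
          exact Sval_no_consec k hk lam (n - 1) ⟨h0, by rw [show n - 1 + 1 = n by omega]; exact hsn⟩
        have hnm : Sval k lam (m - n) = 0 := by
          have : (k : ℝ) * Sval k lam (n - 1) * Sval k lam (m - n) = 0 := by linarith
          rcases mul_eq_zero.mp this with h | h
          · rcases mul_eq_zero.mp h with h | h
            · exact absurd h hk0
            · exact absurd h hn1
          · exact h
        have hcop' : Nat.gcd (m - n) n = 1 := by
          rw [Nat.gcd_sub_self_left (le_of_lt hgt)]; exact hcop
        exact ih (m - n) n (by omega) (by omega) hn hcop' hnm hsn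

/-- For `k ≥ 2` and `m, n ≥ 1` with `gcd(m, n) = 1`, a root of
`P^k_m` is never a root of `P^k_n`. -/
theorem root_not_shared_of_coprime (k m n : ℕ) (hk : 2 ≤ k) (hm : 1 ≤ m) (hn : 1 ≤ n)
    (hcop : Nat.gcd m n = 1) (lam : ℝ) (h : (Ppoly k m).IsRoot lam) :
    ¬ (Ppoly k n).IsRoot lam := by
  intro h'
  exact Sval_key k hk lam (m + n) m n le_rfl hm hn hcop h h'
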